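/- arXiv:1701.02108 — 2 statements merged into one kernel-verified Lean document; each statement's English description precedes it below -/
import Mathlib

section
/- If T is a generating set of the group G, then S = {g₀ · tG₀ : g₀ ∈ G₀, t ∈ T} is a right generating set of the cell space R; moreover if T is symmetric then so is S, and if T and G₀ are finite then S is finite. -/
open MulAction Pointwise Filter

/-- A cell space: a transitive left `G`-set `M` with a choice of base point `m0`
and coordinates `coord m` satisfying `coord m • m0 = m`. -/
structure CellSpace (G M : Type*) [Group G] [MulAction G M] where
  m0 : M
  coord : M → G
  coord_spec : ∀ m : M, coord m • m0 = m

namespace CellSpace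

variable {G M : Type*} [Group G] [MulAction G M] (R : CellSpace G M)

/-- The stabiliser `G₀` of the base point. -/
def G0 : Subgroup G := MulAction.stabilizer G R.m0

/-- The induced right quotient-set semi-action `m ⊲ gG₀ = (coord m * g) • m₀`. -/
def rsa (m : M) (q : G ⧸ R.G0) : M :=
  Quotient.liftOn' q (fun g => (R.coord m * g) • R.m0) (by
    intro a b h
    have hab : a⁻¹ * b ∈ R.G0 := QuotientGroup.leftRel_apply.mp h
    have hm : (a⁻¹ * b) • R.m0 = R.m0 := hab
    have hba : b • R.m0 = a • R.m0 := by
      calc b • R.m0 = a • (a⁻¹ * b) • R.m0 := by rw [← mul_smul]; group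
        _ = a • R.m0 := by rw [hm]
    simp only [mul_smul, hba])

/-- `S⁻¹ = {g⁻¹G₀ : s ∈ S, g ∈ s}`. -/
def sinv (S : Set (G ⧸ R.G0)) : Set (G ⧸ R.G0) :=
  {x | ∃ g : G, ((g : G ⧸ R.G0) ∈ S) ∧ x = ((g⁻¹ : G) : G ⧸ R.G0)}

/-- Iterated application of the right semi-action along a word. -/
def apply (m : M) (l : List (G ⧸ R.G0)) : M := l.foldl R.rsa m

/-- `S` right generates `R`: every point is reachable from `m₀` by a word over `S ∪ S⁻¹`. -/
def RightGenerates (S : Set (G ⧸ R.G0)) : Prop :=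
  ∀ m : M, ∃ l : List (G ⧸ R.G0), (∀ s ∈ l, s ∈ S ∪ R.sinv S) ∧ R.apply R.m0 l = m

/-- `G₀ · S ⊆ S`. -/
def Saturated (S : Set (G ⧸ R.G0)) : Prop :=
  ∀ g₀ ∈ R.G0, ∀ s ∈ S, g₀ • s ∈ S

/-- `S` is symmetric: `S⁻¹ ⊆ S`. -/
def Symm (S : Set (G ⧸ R.G0)) : Prop := R.sinv S ⊆ S

/-- The `S`-metric: the least length of a word over `S` taking `m` to `m'`. -/
noncomputable def dist (S : Set (G ⧸ R.G0)) (m m' : M) : ℕ :=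
  sInf {k | ∃ l : List (G ⧸ R.G0), l.length = k ∧ (∀ s ∈ l, s ∈ S) ∧ R.apply m l = m'}

/-- The ball of radius `ρ` centred at `m` in the `S`-metric. -/
def ball (S : Set (G ⧸ R.G0)) (m : M) (ρ : ℕ) : Set M :=
  {m' | R.dist S m m' ≤ ρ}

/-- The sphere of radius `ρ` centred at `m` in the `S`-metric. -/
def sphere (S : Set (G ⧸ R.G0)) (m : M) (ρ : ℕ) : Set M :=
  {m' | R.dist S m m' = ρ}

/-- The semi-action of `M` on itself under the identification `m ↦ G_{m₀,m}`. -/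
noncomputable def rsaM (m m' : M) : M := R.rsa m ((R.coord m' : G) : G ⧸ R.G0)

end CellSpace
/-- If `T` generates `G`, then `S = {g₀·tG₀ : g₀ ∈ G₀, t ∈ T}` right generates `R`;
if `T` is symmetric so is `S`; and if `T` and `G₀` are finite so is `S`. -/
theorem stmt1 {G M : Type*} [Group G] [MulAction G M] (R : CellSpace G M)
    (T : Set G) (hT : Subgroup.closure T = ⊤) :
    R.RightGenerates {x : G ⧸ R.G0 | ∃ g₀ ∈ R.G0, ∃ t ∈ T, x = ((g₀ * t : G) : G ⧸ R.G0)} ∧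
    ((∀ t ∈ T, t⁻¹ ∈ T) →
      R.Symm {x : G ⧸ R.G0 | ∃ g₀ ∈ R.G0, ∃ t ∈ T, x = ((g₀ * t : G) : G ⧸ R.G0)}) ∧
    (T.Finite → (R.G0 : Set G).Finite →
      Set.Finite {x : G ⧸ R.G0 | ∃ g₀ ∈ R.G0, ∃ t ∈ T, x = ((g₀ * t : G) : G ⧸ R.G0)}) := by
  set S : Set (G ⧸ R.G0) :=
    {x : G ⧸ R.G0 | ∃ g₀ ∈ R.G0, ∃ t ∈ T, x = ((g₀ * t : G) : G ⧸ R.G0)} with hS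
  have coord_mem : ∀ g : G, g⁻¹ * R.coord (g • R.m0) ∈ R.G0 := by
    intro g
    have : (g⁻¹ * R.coord (g • R.m0)) • R.m0 = R.m0 := by
      rw [mul_smul, R.coord_spec, inv_smul_smul]
    exact this
  have rsa_mk : ∀ (m : M) (u : G), R.rsa m ((u : G) : G ⧸ R.G0) = (R.coord m * u) • R.m0 := by
    intro m u; rfl
  refine ⟨?_, ?_, ?_⟩
  · -- RightGenerates
    intro m
    have key : ∀ g ∈ Subgroup.closure T,
        ∃ l : List (G ⧸ R.G0), (∀ s ∈ l, s ∈ S ∪ R.sinv S) ∧ R.apply R.m0 l = g • R.m0 := by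
      intro g hg
      induction hg using Subgroup.closure_induction_right with
      | one => exact ⟨[], by simp, by simp [CellSpace.apply]⟩
      | mul_right g _ t ht ih =>
        obtain ⟨l, hl, happ⟩ := ih
        set c : G := g⁻¹ * R.coord (g • R.m0) with hc
        have hcmem := coord_mem g
        refine ⟨l ++ [((c⁻¹ * t : G) : G ⧸ R.G0)], ?_, ?_⟩
        · intro s hs
          rcases List.mem_append.mp hs with h | h
          · exact hl s h
          · simp only [List.mem_singleton] at h
            subst h
            exact Or.inl ⟨c⁻¹, inv_mem hcmem, t, ht, rfl⟩
        · show List.foldl R.rsa R.m0 (l ++ _) = _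
          rw [List.foldl_append]
          simp only [List.foldl_cons, List.foldl_nil]
          rw [show List.foldl R.rsa R.m0 l = R.apply R.m0 l from rfl, happ, rsa_mk]
          have : R.coord (g • R.m0) * (c⁻¹ * t) = g * t := by
            rw [hc]; group
          rw [this]
      | mul_inv_cancel g _ t ht ih =>
        obtain ⟨l, hl, happ⟩ := ih
        set c : G := g⁻¹ * R.coord (g • R.m0) with hc
        have hcmem := coord_mem g
        refine ⟨l ++ [(((t * c)⁻¹ : G) : G ⧸ R.G0)], ?_, ?_⟩
        · intro s hs
          rcases List.mem_append.mp hs with h | h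
          · exact hl s h
          · simp only [List.mem_singleton] at h
            subst h
            refine Or.inr ⟨t * c, ?_, rfl⟩
            have : ((t * c : G) : G ⧸ R.G0) = ((1 * t : G) : G ⧸ R.G0) := by
              rw [one_mul]
              exact (QuotientGroup.eq.mpr (by simpa using hcmem)).symm
            rw [this]
            exact ⟨1, one_mem _, t, ht, rfl⟩
        · show List.foldl R.rsa R.m0 (l ++ _) = _
          rw [List.foldl_append]
          simp only [List.foldl_cons, List.foldl_nil]
          rw [show List.foldl R.rsa R.m0 l = R.apply R.m0 l from rfl, happ, rsa_mk]
          have : R.coord (g • R.m0) * (t * c)⁻¹ = g * t⁻¹ := by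
            rw [hc]; group
          rw [this]
    obtain ⟨l, hl, happ⟩ := key (R.coord m) (hT ▸ Subgroup.mem_top _)
    exact ⟨l, hl, by rw [happ, R.coord_spec]⟩
  · -- Symm
    intro hTsymm x hx
    obtain ⟨g, hgS, rfl⟩ := hx
    obtain ⟨g₀, hg₀, t, ht, hgt⟩ := hgS
    have h : (g₀ * t)⁻¹ * g ∈ R.G0 := QuotientGroup.eq.mp hgt.symm
    set h' : G := (g₀ * t)⁻¹ * g with hh'
    have hg : g = g₀ * t * h' := by rw [hh']; group
    have : ((g⁻¹ : G) : G ⧸ R.G0) = ((h'⁻¹ * t⁻¹ : G) : G ⧸ R.G0) := by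
      apply QuotientGroup.eq.mpr
      have : g⁻¹⁻¹ * (h'⁻¹ * t⁻¹) = g₀ := by rw [hg]; group
      rw [this]; exact hg₀
    rw [this]
    exact ⟨h'⁻¹, inv_mem h, t⁻¹, hTsymm t ht, rfl⟩
  · -- Finiteness
    intro hTfin hG0fin
    have : S ⊆ (fun p : G × G => ((p.1 * p.2 : G) : G ⧸ R.G0)) ''
        ((R.G0 : Set G) ×ˢ T) := by
      rintro x ⟨g₀, hg₀, t, ht, rfl⟩
      exact ⟨(g₀, t), ⟨hg₀, ht⟩, rfl⟩
    exact Set.Finite.subset (Set.Finite.image _ (hG0fin.prod hTfin)) this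
end

section
/- If m, m' ∈ M and ρ ∈ ℕ with ρ ≤ d_S(m, m'), then the distance from the sphere S_S(m, ρ) to m' equals d_S(m, m') − ρ. -/
open MulAction Pointwise Filter

namespace CellSpace
variable {G M : Type*} [Group G] [MulAction G M] (R : CellSpace G M)

/-- Distance (in `ℕ∞`) from a set to a point, `∞` for the empty set. -/
noncomputable def distToPt (S : Set (G ⧸ R.G0)) (A : Set M) (m' : M) : ℕ∞ :=
  sInf ((fun a => (R.dist S a m' : ℕ∞)) '' A)

end CellSpace

/-! Take a shortest `S`-word from `m` to `m'` and cut it after `ρ` letters. The point reached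
has distance at most `ρ` from `m` and at most `d_S(m, m') - ρ` from `m'`, and by the triangle
inequality both bounds are attained, so it lies on the sphere at the claimed distance. Conversely
the triangle inequality through any point of the sphere gives the lower bound. The triangle
inequality needs every pair of points to be joined by an `S`-word (otherwise `dist` is the junk
value `sInf ∅ = 0`); a single step is undone by a step in `S` thanks to symmetry and
`G₀`-saturation, so words from `m₀` can be reversed. -/

namespace CellSpace

variable {G M : Type*} [Group G] [MulAction G M] (R : CellSpace G M) {S : Set (G ⧸ R.G0)}

theorem rsa_mk (m : M) (g : G) : R.rsa m (g : G ⧸ R.G0) = (R.coord m * g) • R.m0 := rfl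

theorem apply_append (m : M) (l₁ l₂ : List (G ⧸ R.G0)) :
    R.apply m (l₁ ++ l₂) = R.apply (R.apply m l₁) l₂ :=
  List.foldl_append

theorem exists_mem_rsa_rsa_eq (hsat : R.Saturated S) (hsym : R.Symm S) (m : M)
    {q : G ⧸ R.G0} (hq : q ∈ S) : ∃ q' ∈ S, R.rsa (R.rsa m q) q' = m := by
  obtain ⟨g, rfl⟩ := QuotientGroup.mk_surjective q
  set m'' := R.rsa m g
  -- `coord m''` and `coord m * g` both send `m₀` to `m''`, so they differ by some `g₀ ∈ G₀`;
  -- the return step `g₀ g⁻¹ G₀ = g₀ • g⁻¹G₀` is in `S` by symmetry and saturation.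
  set g₀ : G := (R.coord m'')⁻¹ * (R.coord m * g)
  have hg₀ : g₀ ∈ R.G0 := by
    show g₀ • R.m0 = R.m0
    rw [mul_smul, inv_smul_eq_iff, R.coord_spec]
    rfl
  refine ⟨((g₀ * g⁻¹ : G) : G ⧸ R.G0), hsat g₀ hg₀ _ (hsym ⟨g, hq, rfl⟩), ?_⟩
  rw [rsa_mk, show R.coord m'' * (g₀ * g⁻¹) = R.coord m by simp only [g₀]; group, R.coord_spec]

theorem exists_reverse_word (hsat : R.Saturated S) (hsym : R.Symm S) {l : List (G ⧸ R.G0)}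
    (hl : ∀ s ∈ l, s ∈ S) (m : M) :
    ∃ l' : List (G ⧸ R.G0), (∀ s ∈ l', s ∈ S) ∧ R.apply (R.apply m l) l' = m := by
  induction l generalizing m with
  | nil => exact ⟨[], by simp, rfl⟩
  | cons q t ih =>
    obtain ⟨l', hl'S, hl'⟩ := ih (fun s hs => hl s (List.mem_cons_of_mem q hs)) (R.rsa m q)
    obtain ⟨q', hq'S, hq'⟩ := R.exists_mem_rsa_rsa_eq hsat hsym m (hl q List.mem_cons_self)
    refine ⟨l' ++ [q'], ?_, ?_⟩
    · simpa [or_imp, forall_and] using ⟨hl'S, hq'S⟩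
    · rw [apply_append]
      exact (congrArg (R.rsa · q') hl').trans hq'

theorem exists_word (hsat : R.Saturated S) (hsym : R.Symm S) (hgen : R.RightGenerates S)
    (m m' : M) : ∃ l : List (G ⧸ R.G0), (∀ s ∈ l, s ∈ S) ∧ R.apply m l = m' := by
  have hunion : S ∪ R.sinv S = S := Set.union_eq_left.mpr hsym
  obtain ⟨l₁, hl₁S, rfl⟩ := hgen m
  obtain ⟨l₂, hl₂S, rfl⟩ := hgen m'
  rw [hunion] at hl₁S hl₂S
  obtain ⟨l₁', hl₁'S, hl₁'⟩ := R.exists_reverse_word hsat hsym hl₁S R.m0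
  refine ⟨l₁' ++ l₂, ?_, by rw [apply_append, hl₁']⟩
  simpa [or_imp, forall_and] using ⟨hl₁'S, hl₂S⟩

theorem dist_le_length {m m' : M} {l : List (G ⧸ R.G0)} (hl : ∀ s ∈ l, s ∈ S)
    (happ : R.apply m l = m') : R.dist S m m' ≤ l.length :=
  Nat.sInf_le ⟨l, rfl, hl, happ⟩

theorem exists_word_length_eq_dist (hsat : R.Saturated S) (hsym : R.Symm S)
    (hgen : R.RightGenerates S) (m m' : M) :
    ∃ l : List (G ⧸ R.G0), l.length = R.dist S m m' ∧ (∀ s ∈ l, s ∈ S) ∧ R.apply m l = m' := by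
  obtain ⟨l, hl⟩ := R.exists_word hsat hsym hgen m m'
  have hne : {k | ∃ l : List (G ⧸ R.G0), l.length = k ∧ (∀ s ∈ l, s ∈ S) ∧
      R.apply m l = m'}.Nonempty := ⟨l.length, l, rfl, hl⟩
  exact Nat.sInf_mem hne

theorem dist_triangle (hsat : R.Saturated S) (hsym : R.Symm S) (hgen : R.RightGenerates S)
    (m m' m'' : M) : R.dist S m m'' ≤ R.dist S m m' + R.dist S m' m'' := by
  obtain ⟨l₁, hlen₁, hl₁S, hl₁⟩ := R.exists_word_length_eq_dist hsat hsym hgen m m'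
  obtain ⟨l₂, hlen₂, hl₂S, hl₂⟩ := R.exists_word_length_eq_dist hsat hsym hgen m' m''
  have hS : ∀ s ∈ l₁ ++ l₂, s ∈ S := by simpa [or_imp, forall_and] using ⟨hl₁S, hl₂S⟩
  simpa [hlen₁, hlen₂] using R.dist_le_length hS (by rw [apply_append, hl₁, hl₂])

theorem exists_dist_eq_dist_sub (hsat : R.Saturated S) (hsym : R.Symm S)
    (hgen : R.RightGenerates S) {m m' : M} {ρ : ℕ} (hρ : ρ ≤ R.dist S m m') :
    ∃ a, R.dist S m a = ρ ∧ R.dist S a m' = R.dist S m m' - ρ := by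
  obtain ⟨l, hlen, hlS, hl⟩ := R.exists_word_length_eq_dist hsat hsym hgen m m'
  refine ⟨R.apply m (l.take ρ), ?_⟩
  have hma : R.dist S m (R.apply m (l.take ρ)) ≤ ρ :=
    (R.dist_le_length (fun s hs => hlS s (List.mem_of_mem_take hs)) rfl).trans
      (List.length_take_le ρ l)
  have ham' : R.dist S (R.apply m (l.take ρ)) m' ≤ R.dist S m m' - ρ := by
    refine (R.dist_le_length (fun s hs => hlS s (List.mem_of_mem_drop hs)) ?_).trans_eq
      (by rw [List.length_drop, hlen])
    rw [← apply_append, List.take_append_drop, hl]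
  have := R.dist_triangle hsat hsym hgen m (R.apply m (l.take ρ)) m'
  omega

theorem distToPt_eq_dist_of_forall_dist_le {A : Set M} {a m' : M} (ha : a ∈ A)
    (hmin : ∀ b ∈ A, R.dist S a m' ≤ R.dist S b m') :
    R.distToPt S A m' = R.dist S a m' :=
  le_antisymm (sInf_le ⟨a, ha, rfl⟩) <| le_sInf <| by
    rintro _ ⟨b, hb, rfl⟩
    exact Nat.cast_le.mpr (hmin b hb)

end CellSpace

/-- `d_S(S_S(m, ρ), m') = d_S(m, m') − ρ` whenever `ρ ≤ d_S(m, m')`. -/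
theorem stmt10 {G M : Type*} [Group G] [MulAction G M] (R : CellSpace G M)
    (S : Set (G ⧸ R.G0)) (hsat : R.Saturated S) (hsym : R.Symm S)
    (hgen : R.RightGenerates S) (m m' : M) (ρ : ℕ) (hρ : ρ ≤ R.dist S m m') :
    R.distToPt S (R.sphere S m ρ) m' = ((R.dist S m m' - ρ : ℕ) : ℕ∞) := by
  obtain ⟨a, hma, ham'⟩ := R.exists_dist_eq_dist_sub hsat hsym hgen hρ
  rw [← ham']
  refine R.distToPt_eq_dist_of_forall_dist_le hma fun b (hmb : R.dist S m b = ρ) => ?_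
  have := R.dist_triangle hsat hsym hgen m b m'
  omega
end
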